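/- arXiv:math/0009135 — 2 statements merged into one kernel-verified Lean document; each statement's English description precedes it below -/
import Mathlib

section
/- The affine Orlik–Solomon algebra of the cone cG = {0} ⊕ G with base point 0 is isomorphic to the ordinary Orlik–Solomon algebra of G: A_d(cG) ≅ A(G). -/
/-! Write `e₀` for the cone point and `σ` for the shift `eᵢ ↦ eᵢ₊₁`. The substitution
`φ : eᵢ ↦ eᵢ₊₁ - e₀` satisfies `φ x = σ x - e₀ ∂(σ x)`, so `∂∂ = 0` gives `φ (∂x) = ∂(σ x)`:
`φ` maps Orlik–Solomon relations of `G` to relations of `cG` and descends to `A(G) → A(cG)`,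
with image the subalgebra generated by the `aᵢ₊₁ - a₀`. The deletion `e₀ ↦ 0, eᵢ₊₁ ↦ eᵢ`
descends to `A(cG) → A(G)`: a relation `∂e_S` with `0 ∉ S` is sent to `∂e_{S'}`, and if
`0 ∈ S` each term of `∂e_S` is sent to `0` or to the monomial of a dependent set, which lies
in the ideal because `e_T = eᵢ ∂e_T` for `i ∈ T`. The deletion is a left inverse of `φ`, so
`φ` is injective. -/

open ExteriorAlgebra

variable (K : Type*) [Field K] {n : ℕ}

/-- The generator `e i` of the exterior algebra `E = Λ(e_1,…,e_n)`. -/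
noncomputable def gen (i : Fin n) : ExteriorAlgebra K (Fin n → K) :=
  ι K (Pi.single i 1)

/-- The monomial `e_S = e_{i_1} ∧ ⋯ ∧ e_{i_p}` for a tuple `S` given as a list. -/
noncomputable def eS (l : List (Fin n)) : ExteriorAlgebra K (Fin n → K) :=
  (l.map (gen K)).prod

/-- `D` is the boundary map `∂`: it is linear and satisfies
`∂(e_{i_1} ∧ ⋯ ∧ e_{i_p}) = ∑ k (-1)^{k-1} e_{i_1} ∧ ⋯ ∧ ê_{i_k} ∧ ⋯ ∧ e_{i_p}`
(indexing the sum from `0`, the sign of the `k`-th term is `(-1)^k`). -/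
def IsBoundary (D : ExteriorAlgebra K (Fin n → K) →ₗ[K] ExteriorAlgebra K (Fin n → K)) :
    Prop :=
  ∀ l : List (Fin n),
    D (eS K l) = ∑ k : Fin l.length, ((-1 : K) ^ (k : ℕ)) • eS K (l.eraseIdx k)

/-- A circuit of a matroid: a minimal dependent set. -/
def IsCircuit {α : Type*} (M : Matroid α) (C : Set α) : Prop :=
  M.Dep C ∧ ∀ C' ⊂ C, ¬ M.Dep C'

/-- A simple matroid: every subset with at most two elements is independent
(no loops and no parallel points). -/
def MatroidSimple {α : Type*} (M : Matroid α) : Prop :=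
  ∀ i j : α, M.Indep {i, j}

/-- The Orlik–Solomon ideal `I` of a matroid `G`: the ideal of the exterior algebra
generated by the boundaries `∂ e_S` of dependent tuples `S`. -/
noncomputable def OSIdeal (M : Matroid (Fin n))
    (D : ExteriorAlgebra K (Fin n → K) →ₗ[K] ExteriorAlgebra K (Fin n → K)) :
    TwoSidedIdeal (ExteriorAlgebra K (Fin n → K)) :=
  TwoSidedIdeal.span
    {x | ∃ l : List (Fin n), l.Nodup ∧ M.Dep {i | i ∈ l} ∧ x = D (eS K l)}

/-- The defining relation of the Orlik–Solomon algebra `A(G) = E/I`: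
each generator `∂ e_S` (`S` dependent) is set to zero. -/
def OSRel (M : Matroid (Fin n))
    (D : ExteriorAlgebra K (Fin n → K) →ₗ[K] ExteriorAlgebra K (Fin n → K)) :
    ExteriorAlgebra K (Fin n → K) → ExteriorAlgebra K (Fin n → K) → Prop :=
  fun x y => y = 0 ∧ ∃ l : List (Fin n), l.Nodup ∧ M.Dep {i | i ∈ l} ∧ x = D (eS K l)

/-- The Orlik–Solomon algebra `A(G) = E/I`. -/
noncomputable abbrev OSAlgebra (M : Matroid (Fin n))
    (D : ExteriorAlgebra K (Fin n → K) →ₗ[K] ExteriorAlgebra K (Fin n → K)) :=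
  RingQuot (OSRel K M D)

/-- The image `a_i` of the generator `e_i` in the Orlik–Solomon algebra. -/
noncomputable def aGen (M : Matroid (Fin n))
    (D : ExteriorAlgebra K (Fin n → K) →ₗ[K] ExteriorAlgebra K (Fin n → K))
    (i : Fin n) : OSAlgebra K M D :=
  RingQuot.mkAlgHom K (OSRel K M D) (gen K i)

variable {K}

theorem eS_cons (i : Fin n) (l : List (Fin n)) : eS K (i :: l) = gen K i * eS K l := by
  simp [eS]

theorem gen_mul_gen_comm (i j : Fin n) : gen K i * gen K j = -(gen K j * gen K i) :=
  eq_neg_of_add_eq_zero_left (ι_add_mul_swap _ _)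

theorem gen_mul_eS_of_mem {i : Fin n} {l : List (Fin n)} (h : i ∈ l) :
    gen K i * eS K l = 0 := by
  induction l with
  | nil => simp at h
  | cons j l ih =>
    rw [eS_cons, ← mul_assoc]
    rcases List.mem_cons.mp h with rfl | h
    · rw [gen, ι_sq_zero, zero_mul]
    · rw [gen_mul_gen_comm, neg_mul, mul_assoc, ih h, mul_zero, neg_zero]

theorem algHom_ext_gen {A : Type*} [Ring A] [Algebra K A]
    {f g : ExteriorAlgebra K (Fin n → K) →ₐ[K] A} (h : ∀ i, f (gen K i) = g (gen K i)) :
    f = g :=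
  hom_ext <| (Pi.basisFun K (Fin n)).ext fun i => by simpa [gen] using h i

theorem adjoin_range_gen : Algebra.adjoin K (Set.range (gen K (n := n))) = ⊤ := by
  refine top_unique ?_
  rw [← CliffordAlgebra.adjoin_range_ι, Algebra.adjoin_le_iff]
  rintro _ ⟨v, rfl⟩
  rw [← (Pi.basisFun K (Fin n)).sum_repr v, map_sum]
  refine Subalgebra.sum_mem _ fun i _ => ?_
  rw [map_smul, Pi.basisFun_apply]
  exact Subalgebra.smul_mem _ (Algebra.subset_adjoin (Set.mem_range_self (f := gen K) i)) _

theorem span_range_eS : Submodule.span K (Set.range (eS K (n := n))) = ⊤ := by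
  rw [eq_top_iff, ← Algebra.top_toSubmodule, ← adjoin_range_gen, Algebra.adjoin_eq_span]
  refine Submodule.span_mono fun x hx => ?_
  induction hx using Submonoid.closure_induction with
  | mem x hx => obtain ⟨i, rfl⟩ := hx; exact ⟨[i], by simp [eS]⟩
  | one => exact ⟨[], rfl⟩
  | mul x y _ _ hx hy =>
    obtain ⟨l, rfl⟩ := hx
    obtain ⟨m, rfl⟩ := hy
    exact ⟨l ++ m, by simp [eS]⟩

theorem map_eS_of_map_gen {m : ℕ}
    (σ : ExteriorAlgebra K (Fin n → K) →ₐ[K] ExteriorAlgebra K (Fin m → K))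
    (f : Fin n → Fin m)
    (hσ : ∀ i, σ (gen K i) = gen K (f i)) (l : List (Fin n)) :
    σ (eS K l) = eS K (l.map f) := by
  simp [eS, map_list_prod, Function.comp_def, hσ]

namespace IsBoundary

variable {D : ExteriorAlgebra K (Fin n → K) →ₗ[K] ExteriorAlgebra K (Fin n → K)}

theorem apply_one (hD : IsBoundary K D) : D 1 = 0 := by
  simpa [eS] using hD []

theorem apply_eS_cons (hD : IsBoundary K D) (i : Fin n) (l : List (Fin n)) :
    D (eS K (i :: l)) = eS K l - gen K i * D (eS K l) := by
  rw [hD, hD, Finset.mul_sum, sub_eq_add_neg, ← Finset.sum_neg_distrib]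
  simp only [Fin.sum_univ_succ, List.length_cons, Fin.val_zero, pow_zero, one_smul,
    List.eraseIdx_cons_zero, Fin.val_succ, List.eraseIdx_cons_succ, eS_cons, pow_succ,
    mul_smul_comm]
  congr 1
  refine Finset.sum_congr rfl fun k _ => ?_
  module

theorem apply_gen_mul (hD : IsBoundary K D) (i : Fin n) (x : ExteriorAlgebra K (Fin n → K)) :
    D (gen K i * x) = x - gen K i * D x := by
  have key : D ∘ₗ LinearMap.mulLeft K (gen K i) =
      LinearMap.id - LinearMap.mulLeft K (gen K i) ∘ₗ D :=
    LinearMap.ext_on_range span_range_eS fun l => by simp [← eS_cons, hD.apply_eS_cons]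
  simpa using LinearMap.congr_fun key x

theorem apply_apply (hD : IsBoundary K D) (x : ExteriorAlgebra K (Fin n → K)) :
    D (D x) = 0 := by
  have key : D ∘ₗ D = 0 := by
    refine LinearMap.ext_on_range span_range_eS fun l => ?_
    induction l with
    | nil => simp [eS, hD.apply_one]
    | cons i l ih =>
      simp only [LinearMap.comp_apply, LinearMap.zero_apply] at ih ⊢
      rw [hD.apply_eS_cons, map_sub, hD.apply_gen_mul, ih, mul_zero, sub_zero, sub_self]
  exact LinearMap.congr_fun key x

theorem eS_eq_gen_mul (hD : IsBoundary K D) {i : Fin n} {l : List (Fin n)} (h : i ∈ l) :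
    eS K l = gen K i * D (eS K l) := by
  have h0 := hD.apply_gen_mul i (eS K l)
  rw [gen_mul_eS_of_mem h, map_zero] at h0
  exact sub_eq_zero.mp h0.symm

theorem map_apply_of_map_gen {m : ℕ}
    {D' : ExteriorAlgebra K (Fin m → K) →ₗ[K] ExteriorAlgebra K (Fin m → K)}
    (hD : IsBoundary K D) (hD' : IsBoundary K D')
    (σ : ExteriorAlgebra K (Fin n → K) →ₐ[K] ExteriorAlgebra K (Fin m → K))
    (f : Fin n → Fin m)
    (hσ : ∀ i, σ (gen K i) = gen K (f i)) (x : ExteriorAlgebra K (Fin n → K)) :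
    σ (D x) = D' (σ x) := by
  have key : σ.toLinearMap ∘ₗ D = D' ∘ₗ σ.toLinearMap := by
    refine LinearMap.ext_on_range span_range_eS fun l => ?_
    simp only [LinearMap.comp_apply, AlgHom.toLinearMap_apply, hD l, hD' (l.map f), map_sum,
      map_smul, map_eS_of_map_gen σ f hσ]
    exact Fintype.sum_equiv (finCongr (List.length_map f).symm) _ _ fun k => by
      simp [List.eraseIdx_map]
  exact LinearMap.congr_fun key x

end IsBoundary

namespace OSAlgebra

variable {M : Matroid (Fin n)}
  {D : ExteriorAlgebra K (Fin n → K) →ₗ[K] ExteriorAlgebra K (Fin n → K)}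

theorem mk_boundary_eS {l : List (Fin n)} (hl : l.Nodup) (hdep : M.Dep {i | i ∈ l}) :
    RingQuot.mkAlgHom K (OSRel K M D) (D (eS K l)) = 0 := by
  simpa using RingQuot.mkAlgHom_rel K (s := OSRel K M D) ⟨rfl, l, hl, hdep, rfl⟩

theorem mk_eS (hD : IsBoundary K D) {l : List (Fin n)} (hl : l.Nodup)
    (hdep : M.Dep {i | i ∈ l}) : RingQuot.mkAlgHom K (OSRel K M D) (eS K l) = 0 := by
  obtain ⟨i, hi⟩ : ∃ i, i ∈ l := by
    refine List.exists_mem_of_ne_nil l ?_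
    rintro rfl
    exact hdep.not_indep (by simp)
  rw [hD.eS_eq_gen_mul hi, map_mul, mk_boundary_eS hl hdep, mul_zero]

variable {A : Type*} [Ring A] [Algebra K A]

noncomputable def lift (f : ExteriorAlgebra K (Fin n → K) →ₐ[K] A)
    (hf : ∀ l : List (Fin n), l.Nodup → M.Dep {i | i ∈ l} → f (D (eS K l)) = 0) :
    OSAlgebra K M D →ₐ[K] A :=
  RingQuot.liftAlgHom K ⟨f, by
    rintro _ _ ⟨rfl, l, hl, hdep, rfl⟩
    rw [map_zero, hf l hl hdep]⟩

theorem lift_aGen (f : ExteriorAlgebra K (Fin n → K) →ₐ[K] A)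
    (hf : ∀ l : List (Fin n), l.Nodup → M.Dep {i | i ∈ l} → f (D (eS K l)) = 0)
    (i : Fin n) :
    lift f hf (aGen K M D i) = f (gen K i) :=
  RingQuot.liftAlgHom_mkAlgHom_apply _ _ _ _

theorem algHom_ext {f g : OSAlgebra K M D →ₐ[K] A}
    (h : ∀ i, f (aGen K M D i) = g (aGen K M D i)) : f = g :=
  RingQuot.ringQuot_ext' _ _ _ (algHom_ext_gen h)

theorem adjoin_range_aGen : Algebra.adjoin K (Set.range (aGen K M D)) = ⊤ := by
  rw [show aGen K M D = RingQuot.mkAlgHom K (OSRel K M D) ∘ gen K from rfl, Set.range_comp,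
    ← AlgHom.map_adjoin, adjoin_range_gen, Algebra.map_top, AlgHom.range_eq_top]
  exact RingQuot.mkAlgHom_surjective K _

end OSAlgebra

theorem List.mem_eraseIdx_of_notMem_eraseIdx {α : Type*} {l : List α} {k : ℕ} {a b : α}
    (ha : a ∈ l) (ha' : a ∉ l.eraseIdx k) (hb : b ∈ l) (hba : b ≠ a) :
    b ∈ l.eraseIdx k := by
  obtain ⟨i, hi, rfl⟩ := List.getElem_of_mem ha
  obtain ⟨j, hj, rfl⟩ := List.getElem_of_mem hb
  have hik : i = k := by
    by_contra hik
    exact ha' (List.mem_eraseIdx_iff_getElem.mpr ⟨i, hi, hik, rfl⟩)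
  refine List.mem_eraseIdx_iff_getElem.mpr ⟨j, hj, fun hjk => hba ?_, rfl⟩
  simp only [hik, hjk]

theorem List.exists_eq_map_succ {l : List (Fin (n + 1))} (h : 0 ∉ l) :
    ∃ l' : List (Fin n), l = l'.map Fin.succ := by
  induction l with
  | nil => exact ⟨[], rfl⟩
  | cons a l ih =>
    obtain ⟨l', rfl⟩ := ih fun hl => h (List.mem_cons_of_mem _ hl)
    obtain ⟨b, rfl⟩ := Fin.exists_succ_eq.mpr fun ha => h (ha ▸ List.mem_cons_self)
    exact ⟨b :: l', rfl⟩

noncomputable def genHom {m : ℕ} (w : Fin n → Fin m → K) :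
    ExteriorAlgebra K (Fin n → K) →ₐ[K] ExteriorAlgebra K (Fin m → K) :=
  ExteriorAlgebra.map ((Pi.basisFun K (Fin n)).constr K w)

theorem genHom_gen {m : ℕ} (w : Fin n → Fin m → K) (i : Fin n) :
    genHom w (gen K i) = ι K (w i) := by
  rw [genHom, gen, map_apply_ι, ← Pi.basisFun_apply, Module.Basis.constr_basis]

section Cone

noncomputable abbrev shiftHom :
    ExteriorAlgebra K (Fin n → K) →ₐ[K] ExteriorAlgebra K (Fin (n + 1) → K) :=
  genHom fun k => Pi.single k.succ 1

noncomputable abbrev dropZeroHom :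
    ExteriorAlgebra K (Fin (n + 1) → K) →ₐ[K] ExteriorAlgebra K (Fin n → K) :=
  genHom (Fin.cons 0 fun k => Pi.single k 1)

noncomputable abbrev affineHom :
    ExteriorAlgebra K (Fin n → K) →ₐ[K] ExteriorAlgebra K (Fin (n + 1) → K) :=
  genHom fun k => Pi.single k.succ 1 - Pi.single 0 1

theorem shiftHom_gen (k : Fin n) : shiftHom (gen K k) = gen K k.succ :=
  genHom_gen _ k

theorem dropZeroHom_gen_zero : dropZeroHom (gen K (0 : Fin (n + 1))) = 0 := by
  simp [genHom_gen]

theorem dropZeroHom_gen_succ (k : Fin n) : dropZeroHom (gen K k.succ) = gen K k := by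
  rw [genHom_gen, Fin.cons_succ, gen]

theorem affineHom_gen (k : Fin n) : affineHom (gen K k) = gen K k.succ - gen K 0 := by
  rw [genHom_gen, map_sub, gen, gen]

theorem dropZeroHom_shiftHom (x : ExteriorAlgebra K (Fin n → K)) :
    dropZeroHom (shiftHom x) = x := by
  have key : dropZeroHom.comp shiftHom = AlgHom.id K (ExteriorAlgebra K (Fin n → K)) :=
    algHom_ext_gen fun k => by
      rw [AlgHom.comp_apply, shiftHom_gen, dropZeroHom_gen_succ, AlgHom.id_apply]
  exact AlgHom.congr_fun key x

theorem dropZeroHom_eS_of_zero_mem {l : List (Fin (n + 1))} (h : 0 ∈ l) :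
    dropZeroHom (eS K l) = 0 := by
  rw [eS, map_list_prod]
  exact List.prod_eq_zero (List.mem_map.mpr ⟨_, List.mem_map_of_mem h, dropZeroHom_gen_zero⟩)

variable
  {Dc : ExteriorAlgebra K (Fin (n + 1) → K) →ₗ[K] ExteriorAlgebra K (Fin (n + 1) → K)}

theorem affineHom_eq (hDc : IsBoundary K Dc) (x : ExteriorAlgebra K (Fin n → K)) :
    affineHom x = shiftHom x - gen K 0 * Dc (shiftHom x) := by
  have key : (affineHom (K := K) (n := n)).toLinearMap =
      shiftHom.toLinearMap -
        LinearMap.mulLeft K (gen K 0) ∘ₗ Dc ∘ₗ shiftHom.toLinearMap := by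
    refine LinearMap.ext_on_range span_range_eS fun l => ?_
    induction l with
    | nil => simp [eS, hDc.apply_one]
    | cons i l ih =>
      simp only [LinearMap.sub_apply, LinearMap.comp_apply, AlgHom.toLinearMap_apply,
        LinearMap.mulLeft_apply] at ih ⊢
      rw [eS_cons, map_mul, map_mul, ih, affineHom_gen, shiftHom_gen, hDc.apply_gen_mul]
      have hzz : gen K (0 : Fin (n + 1)) * gen K 0 = 0 := ι_sq_zero _
      rw [sub_mul, mul_sub, mul_sub, ← mul_assoc (gen K i.succ), gen_mul_gen_comm i.succ,
        ← mul_assoc (gen K 0) (gen K 0), hzz]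
      noncomm_ring
  exact LinearMap.congr_fun key x

theorem affineHom_boundary
    {D : ExteriorAlgebra K (Fin n → K) →ₗ[K] ExteriorAlgebra K (Fin n → K)}
    (hD : IsBoundary K D) (hDc : IsBoundary K Dc) (x : ExteriorAlgebra K (Fin n → K)) :
    affineHom (D x) = Dc (shiftHom x) := by
  rw [affineHom_eq hDc, hD.map_apply_of_map_gen hDc shiftHom Fin.succ shiftHom_gen,
    hDc.apply_apply, mul_zero, sub_zero]

end Cone

section ConeMatroid

variable {M : Matroid (Fin n)} {cM : Matroid (Fin (n + 1))}
  {D : ExteriorAlgebra K (Fin n → K) →ₗ[K] ExteriorAlgebra K (Fin n → K)}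
  {Dc : ExteriorAlgebra K (Fin (n + 1) → K) →ₗ[K] ExteriorAlgebra K (Fin (n + 1) → K)}

theorem cone_dep_iff (hE : M.E = Set.univ) (hcE : cM.E = Set.univ)
    (hcone : ∀ S : Set (Fin (n + 1)), cM.Indep S ↔ M.Indep (Fin.succ ⁻¹' S))
    (S : Set (Fin (n + 1))) : cM.Dep S ↔ M.Dep (Fin.succ ⁻¹' S) := by
  rw [Matroid.dep_iff, Matroid.dep_iff, hE, hcE, hcone]
  simp

theorem mk_affineHom_boundary_eS (hD : IsBoundary K D) (hDc : IsBoundary K Dc)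
    (hE : M.E = Set.univ) (hcE : cM.E = Set.univ)
    (hcone : ∀ S : Set (Fin (n + 1)), cM.Indep S ↔ M.Indep (Fin.succ ⁻¹' S))
    {l : List (Fin n)} (hl : l.Nodup) (hdep : M.Dep {i | i ∈ l}) :
    RingQuot.mkAlgHom K (OSRel K cM Dc) (affineHom (D (eS K l))) = 0 := by
  rw [affineHom_boundary hD hDc, map_eS_of_map_gen _ _ shiftHom_gen]
  refine OSAlgebra.mk_boundary_eS (hl.map (Fin.succ_injective n)) ?_
  rw [cone_dep_iff hE hcE hcone]
  simpa using hdep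

theorem mk_dropZeroHom_eS (hD : IsBoundary K D) {l : List (Fin (n + 1))} (hl : l.Nodup)
    (h0 : 0 ∉ l) (hdep : M.Dep (Fin.succ ⁻¹' {i | i ∈ l})) :
    RingQuot.mkAlgHom K (OSRel K M D) (dropZeroHom (eS K l)) = 0 := by
  obtain ⟨l, rfl⟩ := List.exists_eq_map_succ h0
  rw [← map_eS_of_map_gen _ _ shiftHom_gen, dropZeroHom_shiftHom]
  exact OSAlgebra.mk_eS hD (hl.of_map _) (by simpa using hdep)

theorem mk_dropZeroHom_boundary_eS (hD : IsBoundary K D) (hDc : IsBoundary K Dc)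
    (hE : M.E = Set.univ) (hcE : cM.E = Set.univ)
    (hcone : ∀ S : Set (Fin (n + 1)), cM.Indep S ↔ M.Indep (Fin.succ ⁻¹' S))
    {l : List (Fin (n + 1))} (hl : l.Nodup) (hdep : cM.Dep {i | i ∈ l}) :
    RingQuot.mkAlgHom K (OSRel K M D) (dropZeroHom (Dc (eS K l))) = 0 := by
  rw [cone_dep_iff hE hcE hcone] at hdep
  by_cases h0 : 0 ∈ l
  · rw [hDc l, map_sum, map_sum]
    refine Finset.sum_eq_zero fun k _ => ?_
    rw [map_smul, map_smul]
    by_cases hk : 0 ∈ l.eraseIdx k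
    · rw [dropZeroHom_eS_of_zero_mem hk, map_zero, smul_zero]
    · have hsub : Fin.succ ⁻¹' {i | i ∈ l} ⊆ Fin.succ ⁻¹' {i | i ∈ l.eraseIdx k} :=
        fun i hi => List.mem_eraseIdx_of_notMem_eraseIdx h0 hk hi (Fin.succ_ne_zero i)
      rw [mk_dropZeroHom_eS hD ((List.eraseIdx_sublist l k).nodup hl) hk
        (hdep.superset hsub (by simp [hE])), smul_zero]
  · obtain ⟨l, rfl⟩ := List.exists_eq_map_succ h0
    rw [← map_eS_of_map_gen _ _ shiftHom_gen,
      ← hD.map_apply_of_map_gen hDc shiftHom Fin.succ shiftHom_gen, dropZeroHom_shiftHom]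
    exact OSAlgebra.mk_boundary_eS (hl.of_map _) (by simpa using hdep)

theorem exists_affine_algHom (hD : IsBoundary K D) (hDc : IsBoundary K Dc)
    (hE : M.E = Set.univ) (hcE : cM.E = Set.univ)
    (hcone : ∀ S : Set (Fin (n + 1)), cM.Indep S ↔ M.Indep (Fin.succ ⁻¹' S)) :
    ∃ Φ : OSAlgebra K M D →ₐ[K] OSAlgebra K cM Dc,
      ∀ k, Φ (aGen K M D k) = aGen K cM Dc k.succ - aGen K cM Dc 0 :=
  ⟨OSAlgebra.lift ((RingQuot.mkAlgHom K _).comp affineHom) fun _ hl hdep => by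
      rw [AlgHom.comp_apply]; exact mk_affineHom_boundary_eS hD hDc hE hcE hcone hl hdep,
    fun k => by rw [OSAlgebra.lift_aGen, AlgHom.comp_apply, affineHom_gen, map_sub]; rfl⟩

theorem exists_dropZero_algHom (hD : IsBoundary K D) (hDc : IsBoundary K Dc)
    (hE : M.E = Set.univ) (hcE : cM.E = Set.univ)
    (hcone : ∀ S : Set (Fin (n + 1)), cM.Indep S ↔ M.Indep (Fin.succ ⁻¹' S)) :
    ∃ Ψ : OSAlgebra K cM Dc →ₐ[K] OSAlgebra K M D,
      ∀ k, Ψ (aGen K cM Dc k.succ - aGen K cM Dc 0) = aGen K M D k :=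
  ⟨OSAlgebra.lift ((RingQuot.mkAlgHom K _).comp dropZeroHom) fun _ hl hdep => by
      rw [AlgHom.comp_apply]; exact mk_dropZeroHom_boundary_eS hD hDc hE hcE hcone hl hdep,
    fun k => by
      rw [map_sub, OSAlgebra.lift_aGen, OSAlgebra.lift_aGen, AlgHom.comp_apply,
        AlgHom.comp_apply, dropZeroHom_gen_succ, dropZeroHom_gen_zero, map_zero, sub_zero]
      rfl⟩

end ConeMatroid

theorem affine_OS_of_cone_general (M : Matroid (Fin n)) (hE : M.E = Set.univ)
    (cM : Matroid (Fin (n + 1))) (hcE : cM.E = Set.univ)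
    (hcone : ∀ S : Set (Fin (n + 1)), cM.Indep S ↔ M.Indep (Fin.succ ⁻¹' S))
    (D : ExteriorAlgebra K (Fin n → K) →ₗ[K] ExteriorAlgebra K (Fin n → K))
    (hD : IsBoundary K D)
    (Dc : ExteriorAlgebra K (Fin (n + 1) → K) →ₗ[K] ExteriorAlgebra K (Fin (n + 1) → K))
    (hDc : IsBoundary K Dc) :
    Nonempty
      ((Algebra.adjoin K
          {x | ∃ k : Fin n, x = aGen K cM Dc k.succ - aGen K cM Dc 0}) ≃ₐ[K]
        OSAlgebra K M D) := by
  obtain ⟨Φ, hΦ⟩ := exists_affine_algHom hD hDc hE hcE hcone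
  obtain ⟨Ψ, hΨ⟩ := exists_dropZero_algHom hD hDc hE hcE hcone
  have hΨΦ : Ψ.comp Φ = AlgHom.id K (OSAlgebra K M D) :=
    OSAlgebra.algHom_ext fun k => by rw [AlgHom.comp_apply, hΦ, hΨ, AlgHom.id_apply]
  have hinj : Function.Injective Φ :=
    Function.LeftInverse.injective (g := Ψ) (AlgHom.congr_fun hΨΦ)
  have hrange : Φ.range =
      Algebra.adjoin K {x | ∃ k : Fin n, x = aGen K cM Dc k.succ - aGen K cM Dc 0} := by
    rw [← Algebra.map_top, ← OSAlgebra.adjoin_range_aGen, AlgHom.map_adjoin, ← Set.range_comp]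
    congr 1
    ext x
    simp [hΦ, eq_comm]
  exact ⟨((AlgEquiv.ofInjective Φ hinj).trans (Subalgebra.equivOfEq _ _ hrange)).symm⟩

/-- the affine Orlik–Solomon algebra of the cone `cG = {0} ⊕ G`
(the subalgebra of `A(cG)` generated by `a_1 − a_0, …, a_n − a_0`) is isomorphic to
the ordinary Orlik–Solomon algebra `A(G)`.  Here `cG` is characterized by:
a set is independent in `cG` iff the part away from the new isthmus `0` is
independent in `G`. -/
theorem affine_OS_of_cone (M : Matroid (Fin n)) (hE : M.E = Set.univ)
    (hsimple : MatroidSimple M)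
    (cM : Matroid (Fin (n + 1))) (hcE : cM.E = Set.univ)
    (hcone : ∀ S : Set (Fin (n + 1)), cM.Indep S ↔ M.Indep (Fin.succ ⁻¹' S))
    (D : ExteriorAlgebra K (Fin n → K) →ₗ[K] ExteriorAlgebra K (Fin n → K))
    (hD : IsBoundary K D)
    (Dc : ExteriorAlgebra K (Fin (n + 1) → K) →ₗ[K] ExteriorAlgebra K (Fin (n + 1) → K))
    (hDc : IsBoundary K Dc) :
    Nonempty
      ((Algebra.adjoin K
          {x | ∃ k : Fin n, x = aGen K cM Dc k.succ - aGen K cM Dc 0}) ≃ₐ[K]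
        OSAlgebra K M D) :=
  affine_OS_of_cone_general M hE cM hcE hcone D hD Dc hDc
end

section
/- Let nbb(G) be the collection of increasing tuples S = (i_1 < ⋯ < i_p) such that i_j = min ℓc({i_j,…,i_p}) for all j. Then the monomials {a_S : S ∈ nbb(G)} are linearly independent in the quadratic closure A_2 = E/I_2. -/
open ExteriorAlgebra

variable (K : Type*) [Field K] {n : ℕ}

/-- A set is line-closed if it contains the line (rank-2 flat) spanned by any two of
its points. -/
def LineClosedSet {α : Type*} (M : Matroid α) (S : Set α) : Prop :=
  ∀ i ∈ S, ∀ j ∈ S, M.closure {i, j} ⊆ S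

/-- The line-closure `ℓc(S)`: the smallest line-closed set containing `S`. -/
def lineClosure {α : Type*} (M : Matroid α) (S : Set α) : Set α :=
  ⋂₀ {T | S ⊆ T ∧ LineClosedSet M T}

/-- The `k`-adic Orlik–Solomon ideal `I_k`. -/
noncomputable def kAdicIdeal (M : Matroid (Fin n))
    (D : ExteriorAlgebra K (Fin n → K) →ₗ[K] ExteriorAlgebra K (Fin n → K)) (k : ℕ) :
    TwoSidedIdeal (ExteriorAlgebra K (Fin n → K)) :=
  TwoSidedIdeal.span
    {x | x ∈ OSIdeal K M D ∧ ∃ j ≤ k, x ∈ ⋀[K]^j (Fin n → K)}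

/-- An increasing tuple `S = (i_1 < ⋯ < i_p)` is in `nbb(G)` iff for each `j`,
`i_j` is the least element of the line-closure `ℓc({i_j,…,i_p})`. -/
def IsNbb (M : Matroid (Fin n)) (l : List (Fin n)) : Prop :=
  l.Pairwise (· < ·) ∧
    ∀ j : Fin l.length, IsLeast (lineClosure M {i | i ∈ l.drop (j : ℕ)}) (l.get j)

/-!
For `S ∈ nbb(G)` of length `p`, the final segments of `S` have line-closures
`X_0 ⊇ X_1 ⊇ ⋯ ⊇ X_{p-1}`. Let `θ : K^n → K^p` send `e_i` to the indicator vector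
`(i ∈ X_c)_c` and let `φ_S = det ∘ Λθ`, so `φ_S(e_T)` is the minor of the incidence matrix of
the flag on the columns `T`. In a chain of line-closed sets two points of a dependent triple
`ijk` lie in the same members, so `Λθ` kills `∂e_{ijk} = (e_j - e_i) ∧ (e_k - e_i)`. The other
generators `∂e_T` of `I` are homogeneous of degree `≥ 3`, so `Λθ` maps `I` into degrees `≥ 3`
and kills the elements of `I` of degree `≤ 2`, which generate `I_2`: `φ_S` descends to `A_2`. Since `S_c = min X_c`, the matrix of
`φ_S(e_S)` is unitriangular, and `φ_S(e_T) ≠ 0` yields a permutation matching each `S_c` with a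
larger or equal entry of `T`. Thus the pairing `φ_S(a_T)` is triangular for the sum of the entries.
-/

theorem eq_or_eq_or_eq_of_inf_le {α : Type*} [Lattice α] {a b c : α}
    (hab : a ≤ b ∨ b ≤ a) (hbc : b ≤ c ∨ c ≤ b) (hac : a ≤ c ∨ c ≤ a)
    (ha : b ⊓ c ≤ a) (hb : a ⊓ c ≤ b) (hc : a ⊓ b ≤ c) : a = b ∨ b = c ∨ a = c := by
  rcases hab with h₁ | h₁ <;> rcases hbc with h₂ | h₂ <;> rcases hac with h₃ | h₃ <;>
    simp_all [inf_of_le_left, inf_of_le_right, le_antisymm_iff]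

theorem linearIndependent_of_triangular {ι R V β : Type*} [CommRing R] [NoZeroDivisors R]
    [AddCommGroup V] [Module R V] [LinearOrder β] (v : ι → V) (f : ι → V →ₗ[R] R)
    (w : ι → β) (hdiag : ∀ i, f i (v i) ≠ 0) (htri : ∀ i j, f i (v j) ≠ 0 → i = j ∨ w i < w j) :
    LinearIndependent R v := by
  classical
  rw [linearIndependent_iff]
  intro c hc
  by_contra hne
  obtain ⟨i, hi, hmax⟩ := Finset.exists_max_image c.support w
    (Finsupp.support_nonempty_iff.mpr hne)
  have hoff : ∀ j ∈ c.support, j ≠ i → c j * f i (v j) = 0 := fun j hj hji => by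
    rw [not_ne_iff.mp fun h => ((htri i j h).resolve_left hji.symm).not_ge (hmax j hj), mul_zero]
  have : c i * f i (v i) = 0 := by
    rw [← Finset.sum_eq_single_of_mem i hi hoff]
    simpa [Finsupp.linearCombination_apply, Finsupp.sum] using congrArg (f i) hc
  exact Finsupp.mem_support_iff.mp hi ((mul_eq_zero.mp this).resolve_right (hdiag i))

theorem List.eq_or_sum_map_lt_of_le_get_equiv {α β : Type*} [LinearOrder α] [AddCommMonoid β]
    [PartialOrder β] [IsOrderedCancelAddMonoid β] {w : α → β} (hw : StrictMono w)
    {l l' : List α} (hl : l.Pairwise (· < ·)) (hl' : l'.Pairwise (· < ·))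
    (e : Fin l.length ≃ Fin l'.length) (h : ∀ c, l.get c ≤ l'.get (e c)) :
    l = l' ∨ (l.map w).sum < (l'.map w).sum := by
  simp only [← Fin.sum_univ_fun_getElem, ← List.get_eq_getElem, ← e.sum_comp]
  have hle : ∀ c ∈ Finset.univ, w (l.get c) ≤ w (l'.get (e c)) := fun c _ => hw.monotone (h c)
  refine (Finset.sum_le_sum hle).eq_or_lt.imp (fun heq => ?_) id
  have hget : ∀ c, l.get c = l'.get (e c) := fun c =>
    hw.injective ((Finset.sum_eq_sum_iff_of_le hle).mp heq c (Finset.mem_univ c))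
  refine hl.eq_of_mem_iff hl' fun x => ⟨fun hx => ?_, fun hx => ?_⟩
  · obtain ⟨c, rfl⟩ := List.mem_iff_get.mp hx
    exact hget c ▸ List.get_mem _ _
  · obtain ⟨b, rfl⟩ := List.mem_iff_get.mp hx
    have := List.get_mem l (e.symm b)
    rwa [hget, e.apply_symm_apply] at this

section DegreeIdeal

variable {A σ : Type*} [Ring A] [SetLike σ A] [AddSubgroupClass σ A] (𝒜 : ℕ → σ) [GradedRing 𝒜]

open DirectSum in
def GradedRing.idealOfDegreeGE (k : ℕ) : TwoSidedIdeal A :=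
  TwoSidedIdeal.mk' {x | ∀ j < k, (decompose 𝒜 x j : A) = 0}
    (fun j _ => by simp)
    (fun hx hy j hj => by simp [hx j hj, hy j hj])
    (fun hx j hj => by
      rw [decompose_neg, DFinsupp.neg_apply, NegMemClass.coe_neg, hx j hj, neg_zero])
    (fun {r x} hx j hj => by
      rw [decompose_mul, coe_mul_apply_eq_sum_antidiagonal]
      refine Finset.sum_eq_zero fun ab hab => ?_
      rw [hx ab.2 (by have := Finset.HasAntidiagonal.mem_antidiagonal.mp hab; omega), mul_zero])
    (fun {x r} hx j hj => by
      rw [decompose_mul, coe_mul_apply_eq_sum_antidiagonal]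
      refine Finset.sum_eq_zero fun ab hab => ?_
      rw [hx ab.1 (by have := Finset.HasAntidiagonal.mem_antidiagonal.mp hab; omega), zero_mul])

variable {𝒜}

theorem GradedRing.mem_idealOfDegreeGE {k : ℕ} {x : A} :
    x ∈ idealOfDegreeGE 𝒜 k ↔ ∀ j < k, (DirectSum.decompose 𝒜 x j : A) = 0 :=
  TwoSidedIdeal.mem_mk' ..

theorem GradedRing.mem_idealOfDegreeGE_of_mem {k i : ℕ} {x : A} (hx : x ∈ 𝒜 i) (hki : k ≤ i) :
    x ∈ idealOfDegreeGE 𝒜 k :=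
  mem_idealOfDegreeGE.mpr fun _ hj => DirectSum.decompose_of_mem_ne 𝒜 hx (by omega)

theorem GradedRing.eq_zero_of_mem_idealOfDegreeGE {k i : ℕ} {x : A} (hx : x ∈ 𝒜 i) (hik : i < k)
    (h : x ∈ idealOfDegreeGE 𝒜 k) : x = 0 := by
  rw [← DirectSum.decompose_of_mem_same 𝒜 hx, mem_idealOfDegreeGE.mp h i hik]

end DegreeIdeal

namespace ExteriorAlgebra

variable {R M N : Type*} [CommRing R] [AddCommGroup M] [Module R M] [AddCommGroup N] [Module R N]

theorem map_mem_exteriorPower (f : M →ₗ[R] N) {i : ℕ} {x : ExteriorAlgebra R M}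
    (hx : x ∈ ⋀[R]^i M) : map f x ∈ ⋀[R]^i N := by
  have hι : (LinearMap.range (ι R)).map (map f).toLinearMap ≤ LinearMap.range (ι R) := by
    rintro _ ⟨_, ⟨m, rfl⟩, rfl⟩
    exact ⟨f m, (map_apply_ι f m).symm⟩
  have := (Submodule.map_pow (LinearMap.range (ι R)) (map f) i).trans_le (pow_le_pow_left' hι i)
  exact this ⟨x, hx, rfl⟩

theorem ι_sub_mul_ι_sub (a b c : M) :
    ι R (b - a) * ι R (c - a) = ι R b * ι R c - ι R a * ι R c + ι R a * ι R b := by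
  rw [map_sub, map_sub, sub_mul, mul_sub, mul_sub, ι_sq_zero,
    eq_neg_of_add_eq_zero_left (ι_add_mul_swap b a)]
  abel

end ExteriorAlgebra

section LineClosure

variable {α : Type*} {M : Matroid α}

theorem subset_lineClosure (S : Set α) : S ⊆ lineClosure M S := fun _ hx _ hT => hT.1 hx

theorem lineClosedSet_lineClosure (S : Set α) : LineClosedSet M (lineClosure M S) :=
  fun i hi j hj _ hx T hT => hT.2 i (hi T hT) j (hj T hT) hx

theorem lineClosure_mono {S S' : Set α} (h : S ⊆ S') : lineClosure M S ⊆ lineClosure M S' :=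
  fun _ hx T hT => hx T ⟨h.trans hT.1, hT.2⟩

theorem MatroidSimple.three_le_length (hs : MatroidSimple M) {l : List α}
    (hdep : M.Dep {i | i ∈ l}) : 3 ≤ l.length := by
  by_contra! hl
  apply hdep.not_indep
  rcases l with _ | ⟨a, _ | ⟨b, _ | ⟨c, t⟩⟩⟩
  · simp
  · simpa using hs a a
  · convert hs a b using 1
    ext
    simp
  · simp only [List.length_cons] at hl
    omega

theorem MatroidSimple.mem_closure_of_dep (hs : MatroidSimple M) {x y z : α}
    (hdep : M.Dep {x, y, z}) : x ∈ M.closure {y, z} :=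
  ((hs y z).insert_dep_iff.mp hdep).1

theorem exists_pair_mem_iff_of_antitone {ι : Type*} [LinearOrder ι] (hs : MatroidSimple M)
    {X : ι → Set α} (hX : Antitone X) (hlc : ∀ c, LineClosedSet M (X c)) {i j k : α}
    (hdep : M.Dep {i, j, k}) :
    (∀ c, i ∈ X c ↔ j ∈ X c) ∨ (∀ c, j ∈ X c ↔ k ∈ X c) ∨ (∀ c, i ∈ X c ↔ k ∈ X c) := by
  set T : α → Set ι := fun x => {c | x ∈ X c}
  have hT : ∀ x, IsLowerSet (T x) := fun x _ _ hcd hx => hX hcd hx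
  have hcl : ∀ {x y z}, M.Dep {x, y, z} → T y ∩ T z ⊆ T x := fun hd c hc =>
    hlc c _ hc.1 _ hc.2 (hs.mem_closure_of_dep hd)
  have hperm₁ : M.Dep {j, i, k} := by rwa [Set.insert_comm]
  have hperm₂ : M.Dep {k, i, j} := by rwa [Set.insert_comm, Set.pair_comm, Set.insert_comm]
  have := eq_or_eq_or_eq_of_inf_le ((hT i).total (hT j)) ((hT j).total (hT k))
    ((hT i).total (hT k)) (hcl hdep) (hcl hperm₁) (hcl hperm₂)
  simpa only [Set.ext_iff, T, Set.mem_ofPred_eq] using this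

end LineClosure

section Boundary

variable {K}

theorem eS_eq_ιMulti (l : List (Fin n)) :
    eS K l = ιMulti K l.length (fun a => Pi.single (l.get a) 1) := by
  rw [ιMulti_apply, eS, show (fun a => ι K (Pi.single (l.get a) 1)) = gen K ∘ l.get from rfl,
    ← List.map_ofFn, List.ofFn_get]

theorem map_eS {W : Type*} [AddCommGroup W] [Module K W] (f : (Fin n → K) →ₗ[K] W)
    (l : List (Fin n)) :
    map f (eS K l) = ιMulti K l.length (fun a => f (Pi.single (l.get a) 1)) := by
  rw [eS_eq_ιMulti, map_apply_ιMulti]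
  rfl

theorem eS_mem_exteriorPower (l : List (Fin n)) : eS K l ∈ ⋀[K]^l.length (Fin n → K) := by
  rw [eS_eq_ιMulti]
  exact ιMulti_range K _ ⟨_, rfl⟩

variable {D : ExteriorAlgebra K (Fin n → K) →ₗ[K] ExteriorAlgebra K (Fin n → K)}

theorem IsBoundary.apply_eS_mem (hD : IsBoundary K D) (l : List (Fin n)) :
    D (eS K l) ∈ ⋀[K]^(l.length - 1) (Fin n → K) := by
  rw [hD l]
  refine Submodule.sum_mem _ fun k _ => Submodule.smul_mem _ _ ?_
  simpa [List.length_eraseIdx] using eS_mem_exteriorPower (l.eraseIdx k)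

theorem IsBoundary.apply_eS_triple (hD : IsBoundary K D) (i j k : Fin n) :
    D (eS K [i, j, k]) =
      ι K (Pi.single j 1 - Pi.single i 1) * ι K (Pi.single k 1 - Pi.single i 1) := by
  rw [ι_sub_mul_ι_sub, hD]
  simp [Fin.sum_univ_succ, eS, gen, List.eraseIdx]
  abel

end Boundary

section OrlikSolomon

variable {K} {M : Matroid (Fin n)}
  {D : ExteriorAlgebra K (Fin n → K) →ₗ[K] ExteriorAlgebra K (Fin n → K)}
  {W : Type*} [AddCommGroup W] [Module K W]

theorem OSIdeal_le_comap_idealOfDegreeGE (hs : MatroidSimple M) (hD : IsBoundary K D)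
    (f : (Fin n → K) →ₗ[K] W) (hf : ∀ i j k, M.Dep {i, j, k} → map f (D (eS K [i, j, k])) = 0) :
    OSIdeal K M D ≤ (GradedRing.idealOfDegreeGE (fun i : ℕ => ⋀[K]^i W) 3).comap (map f) := by
  rw [OSIdeal, TwoSidedIdeal.span_le]
  rintro _ ⟨l, -, hdep, rfl⟩
  rw [SetLike.mem_coe, TwoSidedIdeal.mem_comap]
  rcases (hs.three_le_length hdep).eq_or_lt with h3 | h4
  · obtain ⟨i, j, k, rfl⟩ := List.length_eq_three.mp h3.symm
    rw [hf i j k (by simpa [Set.insert_def] using hdep)]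
    exact zero_mem _
  · exact GradedRing.mem_idealOfDegreeGE_of_mem (map_mem_exteriorPower f (hD.apply_eS_mem l))
      (by omega)

theorem kAdicIdeal_two_le_ker_map (hs : MatroidSimple M) (hD : IsBoundary K D)
    (f : (Fin n → K) →ₗ[K] W) (hf : ∀ i j k, M.Dep {i, j, k} → map f (D (eS K [i, j, k])) = 0) :
    kAdicIdeal K M D 2 ≤ TwoSidedIdeal.ker (map f) := by
  rw [kAdicIdeal, TwoSidedIdeal.span_le]
  rintro x ⟨hxI, j, hj, hxj⟩
  exact (TwoSidedIdeal.mem_ker _).mpr <|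
    GradedRing.eq_zero_of_mem_idealOfDegreeGE (𝒜 := fun i : ℕ => ⋀[K]^i W)
    (map_mem_exteriorPower f hxj) (by omega)
    ((TwoSidedIdeal.mem_comap _).mp (OSIdeal_le_comap_idealOfDegreeGE hs hD f hf hxI))

end OrlikSolomon

section IncidenceMinor

noncomputable def topDet (p : ℕ) : ExteriorAlgebra K (Fin p → K) →ₗ[K] K :=
  liftAlternating (Pi.single (M := fun i => (Fin p → K) [⋀^Fin i]→ₗ[K] K) p
    Matrix.detRowAlternating)

variable {K} {p : ℕ}

theorem topDet_ιMulti_self (w : Fin p → Fin p → K) :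
    topDet K p (ιMulti K p w) = (Matrix.of w).det := by
  rw [topDet, liftAlternating_apply_ιMulti, Pi.single_eq_same]
  rfl

theorem exists_equiv_of_topDet_ιMulti_ne_zero {m : ℕ} {w : Fin m → Fin p → K}
    (h : topDet K p (ιMulti K m w) ≠ 0) : ∃ e : Fin p ≃ Fin m, ∀ c, w (e c) c ≠ 0 := by
  rcases eq_or_ne m p with rfl | hne
  · rw [topDet_ιMulti_self, Matrix.det_apply] at h
    obtain ⟨σ, -, hσ⟩ := Finset.exists_ne_zero_of_sum_ne_zero h
    exact ⟨σ, fun c => Finset.prod_ne_zero_iff.mp ((smul_ne_zero_iff_ne _).mp hσ) c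
      (Finset.mem_univ c)⟩
  · rw [topDet, liftAlternating_apply_ιMulti, Pi.single_eq_of_ne hne] at h
    exact (h rfl).elim

noncomputable def setIncidence (X : Fin p → Set (Fin n)) : (Fin n → K) →ₗ[K] (Fin p → K) :=
  Matrix.mulVecLin (Matrix.of fun c i => (X c).indicator 1 i)

theorem setIncidence_single (X : Fin p → Set (Fin n)) (x : Fin n) :
    setIncidence X (Pi.single x (1 : K)) = fun c => (X c).indicator 1 x := by
  rw [setIncidence, Matrix.mulVecLin_apply, Matrix.mulVec_single_one]
  rfl

theorem setIncidence_single_eq {X : Fin p → Set (Fin n)} {x y : Fin n}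
    (h : ∀ c, x ∈ X c ↔ y ∈ X c) :
    setIncidence X (Pi.single x (1 : K)) = setIncidence X (Pi.single y 1) := by
  rw [setIncidence_single, setIncidence_single]
  funext c
  by_cases hx : x ∈ X c
  · rw [Set.indicator_of_mem hx, Set.indicator_of_mem ((h c).mp hx), Pi.one_apply, Pi.one_apply]
  · rw [Set.indicator_of_notMem hx, Set.indicator_of_notMem (mt (h c).mpr hx)]

variable (K) in
noncomputable def incidenceMinor (X : Fin p → Set (Fin n)) :
    ExteriorAlgebra K (Fin n → K) →ₗ[K] K :=
  topDet K p ∘ₗ (map (setIncidence X)).toLinearMap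

theorem incidenceMinor_eS (X : Fin p → Set (Fin n)) (l : List (Fin n)) :
    incidenceMinor K X (eS K l) =
      topDet K p (ιMulti K l.length fun a c => (X c).indicator 1 (l.get a)) := by
  simp only [incidenceMinor, LinearMap.comp_apply, AlgHom.toLinearMap_apply, map_eS,
    setIncidence_single]

variable {M : Matroid (Fin n)}
  {D : ExteriorAlgebra K (Fin n → K) →ₗ[K] ExteriorAlgebra K (Fin n → K)}
  {X : Fin p → Set (Fin n)}

theorem map_setIncidence_boundary_triple (hs : MatroidSimple M) (hD : IsBoundary K D)
    (hX : Antitone X) (hlc : ∀ c, LineClosedSet M (X c)) {i j k : Fin n}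
    (hdep : M.Dep {i, j, k}) : map (setIncidence X) (D (eS K [i, j, k])) = 0 := by
  rw [hD.apply_eS_triple, map_mul, map_apply_ι, map_apply_ι, map_sub (setIncidence X),
    map_sub (setIncidence X)]
  rcases exists_pair_mem_iff_of_antitone hs hX hlc hdep with h | h | h
  · rw [setIncidence_single_eq h, sub_self, map_zero, zero_mul]
  · rw [setIncidence_single_eq h, ι_sq_zero]
  · rw [setIncidence_single_eq h, sub_self, map_zero, mul_zero]

theorem span_kAdicIdeal_le_ker_incidenceMinor (hs : MatroidSimple M) (hD : IsBoundary K D)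
    (hX : Antitone X) (hlc : ∀ c, LineClosedSet M (X c)) :
    Submodule.span K {x | x ∈ kAdicIdeal K M D 2} ≤ LinearMap.ker (incidenceMinor K X) := by
  refine Submodule.span_le.mpr fun x hx => ?_
  have := kAdicIdeal_two_le_ker_map hs hD (setIncidence X)
    (fun _ _ _ => map_setIncidence_boundary_triple hs hD hX hlc) hx
  simp [incidenceMinor, (TwoSidedIdeal.mem_ker _).mp this]

end IncidenceMinor

section Nbb

variable {K} {M : Matroid (Fin n)} {S S' : List (Fin n)}

variable (M S) in
def nbbFlag (c : Fin S.length) : Set (Fin n) := lineClosure M {i | i ∈ S.drop c}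

theorem antitone_nbbFlag : Antitone (nbbFlag M S) := fun _ _ hcd =>
  lineClosure_mono fun _ hx => List.drop_subset_drop_left S hcd hx

theorem IsNbb.le_of_mem_nbbFlag (hS : IsNbb M S) {c : Fin S.length} {x : Fin n}
    (hx : x ∈ nbbFlag M S c) : S.get c ≤ x :=
  (hS.2 c).2 hx

theorem IsNbb.get_mem_nbbFlag_iff (hS : IsNbb M S) (a c : Fin S.length) :
    S.get a ∈ nbbFlag M S c ↔ c ≤ a := by
  refine ⟨fun h => not_lt.mp fun hac => ?_, fun hca => subset_lineClosure _ ?_⟩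
  · exact (hS.le_of_mem_nbbFlag h).not_gt (hS.1.sortedLT.strictMono_get hac)
  · refine List.mem_drop_iff_getElem.mpr ⟨a - c, by omega, ?_⟩
    simp only [List.get_eq_getElem]
    congr 1
    omega

theorem IsNbb.incidenceMinor_nbbFlag_self (hS : IsNbb M S) :
    incidenceMinor K (nbbFlag M S) (eS K S) = 1 := by
  rw [incidenceMinor_eS, topDet_ιMulti_self, Matrix.det_of_isLowerTriangular]
  · exact Finset.prod_eq_one fun a _ =>
      Set.indicator_of_mem ((hS.get_mem_nbbFlag_iff a a).mpr le_rfl) _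
  · intro a c hac
    exact Set.indicator_of_notMem
      (mt (hS.get_mem_nbbFlag_iff a c).mp (not_le.mpr (OrderDual.toDual_lt_toDual.mp hac))) _

theorem IsNbb.eq_or_sum_lt_of_incidenceMinor_ne_zero (hS : IsNbb M S) (hS' : IsNbb M S')
    (h : incidenceMinor K (nbbFlag M S) (eS K S') ≠ 0) :
    S = S' ∨ (S.map Fin.val).sum < (S'.map Fin.val).sum := by
  rw [incidenceMinor_eS] at h
  obtain ⟨e, he⟩ := exists_equiv_of_topDet_ιMulti_ne_zero h
  exact List.eq_or_sum_map_lt_of_le_get_equiv Fin.val_strictMono hS.1 hS'.1 e fun c =>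
    hS.le_of_mem_nbbFlag (Set.mem_of_indicator_ne_zero (he c))

end Nbb

theorem nbb_linearIndependent (M : Matroid (Fin n))
    (hsimple : MatroidSimple M)
    (D : ExteriorAlgebra K (Fin n → K) →ₗ[K] ExteriorAlgebra K (Fin n → K))
    (hD : IsBoundary K D) :
    LinearIndependent K
      (fun S : {l : List (Fin n) // IsNbb M l} =>
        (Submodule.Quotient.mk (eS K S.1) :
          ExteriorAlgebra K (Fin n → K) ⧸
            Submodule.span K {x | x ∈ kAdicIdeal K M D 2})) := by
  have hker : ∀ S : List (Fin n), Submodule.span K {x | x ∈ kAdicIdeal K M D 2} ≤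
      LinearMap.ker (incidenceMinor K (nbbFlag M S)) := fun S =>
    span_kAdicIdeal_le_ker_incidenceMinor hsimple hD antitone_nbbFlag
      fun _ => lineClosedSet_lineClosure _
  refine linearIndependent_of_triangular _ (fun S => Submodule.liftQ _ _ (hker S.1))
    (fun S => (S.1.map Fin.val).sum) (fun S => ?_) (fun S S' h => ?_)
  · simp [S.2.incidenceMinor_nbbFlag_self]
  · rw [Submodule.liftQ_apply] at h
    exact (S.2.eq_or_sum_lt_of_incidenceMinor_ne_zero S'.2 h).imp_left Subtype.ext
end
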